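/- Let n = 1, let r₁, r₂, r₃ > 0 and t₁, t₂, t₃ ∈ ℝ. Then the convolution σ_{r₁,t₁} ∗ σ_{r₂,t₂} ∗ σ_{r₃,t₃}, i.e. the pushforward of the product measure σ_{r₁,t₁} ⊗ σ_{r₂,t₂} ⊗ σ_{r₃,t₃} under the map (h₁,h₂,h₃) ↦ h₁·h₂·h₃ from (H^1)³ to H^1, is absolutely continuous with respect to Lebesgue (Haar) measure on H^1. -/

import Mathlib

open MeasureTheory

attribute [local instance] InnerProductSpace.complexToReal

noncomputable instance (n : ℕ) : MeasurableSpace (EuclideanSpace ℂ (Fin n)) := borel _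
instance (n : ℕ) : BorelSpace (EuclideanSpace ℂ (Fin n)) := ⟨rfl⟩

/-- The underlying space of the Heisenberg group `H^n = ℂ^n × ℝ`. -/
abbrev Heis (n : ℕ) := EuclideanSpace ℂ (Fin n) × ℝ

/-- The Heisenberg group multiplication
`(z,t)·(w,s) = (z+w, t+s+(1/2)Im⟨z,w⟩)` with `⟨z,w⟩ = ∑ j, z j * conj (w j)`. -/
noncomputable def heisMul {n : ℕ} (p q : Heis n) : Heis n :=
  (p.1 + q.1, p.2 + q.2 + (1 / 2) * (∑ j, p.1 j * (starRingEnd ℂ) (q.1 j)).im)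

/-- The normalized rotation-invariant surface probability measure on the unit
sphere of `ℂ^n`, obtained by normalizing the surface measure induced by the
Lebesgue (Haar) measure. -/
noncomputable def unitSphereProb (n : ℕ) :
    Measure (Metric.sphere (0 : EuclideanSpace ℂ (Fin n)) 1) :=
  (((volume : Measure (EuclideanSpace ℂ (Fin n))).toSphere Set.univ)⁻¹) •
    (volume : Measure (EuclideanSpace ℂ (Fin n))).toSphere

/-- The spherical measure `σ_{r,t}` on `H^n`: the pushforward of the normalized
surface probability measure of the unit sphere under `v ↦ (r·v, t)`. -/
noncomputable def heisSigma (n : ℕ) (r t : ℝ) : Measure (Heis n) :=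
  Measure.map
    (fun v : Metric.sphere (0 : EuclideanSpace ℂ (Fin n)) 1 =>
      (((r : ℂ) • (v : EuclideanSpace ℂ (Fin n)), t) : Heis n))
    (unitSphereProb n)


/-!
Parametrize `σ_{r,t}` by the angle, `θ ↦ (r e^{iθ}, t)`: polar coordinates show that `σ_{r,t}` is
absolutely continuous with respect to the image of Lebesgue measure on `ℝ`. Hence the triple
convolution is dominated by the image of Lebesgue measure on `ℝ³` under the real-analytic map
`θ ↦ (∑ r_k e^{iθ_k}, t + ½ ∑_{j<k} r_j r_k sin (θ_j - θ_k))`, read in the coordinates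
`ℂ × ℝ ≅ ℝ³` of `H^1`. Its Jacobian determinant is real-analytic and does not vanish at
`θ = (0, 0, π/2)`, so it vanishes only on a null set. Near every point where the Jacobian is
invertible the map is a diffeomorphism, so it pulls null sets back to null sets there.
-/

open Set Real

theorem AnalyticOnNhd.ae_ne_zero {E : Type*} [NormedAddCommGroup E] [NormedSpace ℝ E]
    {f : ℝ → E} (hf : AnalyticOnNhd ℝ f univ) (hf₀ : ∃ x, f x ≠ 0)
    (μ : Measure ℝ) [NullSingletonClass μ] : ∀ᵐ x ∂μ, f x ≠ 0 := by
  have h := (hf.eqOn_zero_or_eventually_ne_zero_of_preconnected isPreconnected_univ).resolve_left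
    fun h ↦ hf₀.elim fun x hx ↦ hx (h (mem_univ x))
  exact Measure.restrict_univ (μ := μ) ▸ ae_restrict_le_codiscreteWithin (μ := μ) .univ h

theorem AnalyticOnNhd.ae_ne_zero_prod {E F : Type*} [NormedAddCommGroup E] [NormedSpace ℝ E]
    [MeasurableSpace E] [OpensMeasurableSpace E] [NormedAddCommGroup F] [NormedSpace ℝ F]
    {ν : Measure E} [SFinite ν]
    (hν : ∀ g : E → F, AnalyticOnNhd ℝ g univ → (∃ y, g y ≠ 0) → ∀ᵐ y ∂ν, g y ≠ 0)
    {f : ℝ × E → F} (hf : AnalyticOnNhd ℝ f univ) (hf₀ : ∃ p, f p ≠ 0)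
    (μ : Measure ℝ) [NullSingletonClass μ] [SFinite μ] : ∀ᵐ p ∂μ.prod ν, f p ≠ 0 := by
  obtain ⟨⟨x₀, y₀⟩, h₀⟩ := hf₀
  have hslice : ∀ᵐ x ∂μ, f (x, y₀) ≠ 0 :=
    AnalyticOnNhd.ae_ne_zero (fun x _ ↦ (hf _ trivial).comp₂ analyticAt_id analyticAt_const)
      ⟨x₀, h₀⟩ μ
  refine (Measure.ae_prod_iff_ae_ae (hf.continuous.isOpen_preimage _ isOpen_ne).measurableSet).2
    (hslice.mono fun x hx ↦ hν _ (fun y _ ↦ ?_) ⟨y₀, hx⟩)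
  exact (hf _ trivial).comp₂ analyticAt_const analyticAt_id

theorem AnalyticOnNhd.ae_ne_zero_real_prod_real_prod_real {F : Type*} [NormedAddCommGroup F]
    [NormedSpace ℝ F] {f : ℝ × ℝ × ℝ → F} (hf : AnalyticOnNhd ℝ f univ) (hf₀ : ∃ p, f p ≠ 0) :
    ∀ᵐ p, f p ≠ 0 :=
  hf.ae_ne_zero_prod (fun _ hg hg₀ ↦ hg.ae_ne_zero_prod (fun _ hh hh₀ ↦ hh.ae_ne_zero hh₀ _)
    hg₀ _) hf₀ _

section ChangeOfVariables

variable {E : Type*} [NormedAddCommGroup E] [NormedSpace ℝ E] [FiniteDimensional ℝ E]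
  [MeasurableSpace E] [BorelSpace E] (μ : Measure E) [μ.IsAddHaarMeasure]

theorem MeasureTheory.Measure.addHaar_eq_zero_of_addHaar_image_eq_zero
    {f : E → E} {f' : E → E →L[ℝ] E} {s : Set E} (hs : MeasurableSet s)
    (hf' : ∀ x ∈ s, HasFDerivWithinAt f (f' x) s x) (hinj : InjOn f s)
    (hdet : ∀ x ∈ s, (f' x).det ≠ 0) (himage : μ (f '' s) = 0) : μ s = 0 := by
  have h := lintegral_abs_det_fderiv_eq_addHaar_image μ hs hf' hinj
  rw [himage, lintegral_eq_zero_iff' (aemeasurable_ofReal_abs_det_fderivWithin μ hs hf')] at h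
  have : ∀ᵐ x ∂μ.restrict s, False := by
    filter_upwards [h, ae_restrict_mem hs] with x hx hxs
    simp_all
  rwa [Filter.eventually_false_iff_eq_bot, ae_eq_bot, Measure.restrict_eq_zero] at this

theorem MeasureTheory.Measure.map_absolutelyContinuous_of_ae_det_fderiv_ne_zero
    {f : E → E} (hf : ContDiff ℝ 1 f) (hdet : ∀ᵐ x ∂μ, (fderiv ℝ f x).det ≠ 0) :
    μ.map f ≪ μ := by
  have hfm : Measurable f := hf.continuous.measurable
  set D := {x | (fderiv ℝ f x).det ≠ 0}
  have hD : IsOpen D := isOpen_ne.preimage <|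
    ContinuousLinearMap.continuous_det.comp (hf.continuous_fderiv one_ne_zero)
  refine AbsolutelyContinuous.mk fun N hN hN₀ ↦ ?_
  rw [map_apply hfm hN]
  suffices μ (f ⁻¹' N ∩ D) = 0 from
    measure_mono_null (fun x hx ↦ (em (x ∈ D)).imp (⟨hx, ·⟩) id) <|
      measure_union_null this (ae_iff.1 hdet)
  refine measure_null_of_locally_null _ fun x ⟨_, hxD⟩ ↦ ?_
  have hstrict := hf.hasStrictFDerivAt (x := x) one_ne_zero
  let Φ := hstrict.toOpenPartialHomeomorph f
    (f' := (fderiv ℝ f x).toContinuousLinearEquivOfDetNeZero hxD)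
  refine ⟨f ⁻¹' N ∩ D ∩ Φ.source, inter_mem_nhdsWithin _
    (Φ.open_source.mem_nhds hstrict.mem_toOpenPartialHomeomorph_source), ?_⟩
  refine addHaar_eq_zero_of_addHaar_image_eq_zero μ
    ((hfm hN).inter hD.measurableSet |>.inter Φ.open_source.measurableSet)
    (fun y _ ↦ (hf.differentiable one_ne_zero y).hasFDerivAt.hasFDerivWithinAt)
    (Φ.injOn.mono inter_subset_right) (fun y hy ↦ hy.1.2) ?_
  exact measure_mono_null (image_subset_iff.2 fun y hy ↦ hy.1.1) hN₀

end ChangeOfVariables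

theorem ContinuousLinearMap.det_real_prod_real_prod_real (L : ℝ × ℝ × ℝ →L[ℝ] ℝ × ℝ × ℝ) :
    L.det = Matrix.det !![(L (1, 0, 0)).1, (L (0, 1, 0)).1, (L (0, 0, 1)).1;
      (L (1, 0, 0)).2.1, (L (0, 1, 0)).2.1, (L (0, 0, 1)).2.1;
      (L (1, 0, 0)).2.2, (L (0, 1, 0)).2.2, (L (0, 0, 1)).2.2] := by
  let e : (ℝ × ℝ × ℝ) ≃ₗ[ℝ] (Fin 3 → ℝ) :=
    (LinearEquiv.refl ℝ ℝ).prodCongr (LinearEquiv.finTwoArrow ℝ ℝ).symm ≪≫ₗ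
      Fin.consLinearEquiv ℝ (fun _ ↦ ℝ)
  rw [ContinuousLinearMap.det, ← LinearMap.det_conj _ e, ← LinearMap.det_toMatrix']
  congr 1
  ext i j
  fin_cases i <;> fin_cases j <;>
    simp [LinearMap.toMatrix'_apply, e, LinearEquiv.finTwoArrow, Fin.tail]

section CircleProductCoords

noncomputable def circleProductCoords (r₁ r₂ r₃ t : ℝ) (θ : ℝ × ℝ × ℝ) : ℝ × ℝ × ℝ :=
  (r₁ * cos θ.1 + r₂ * cos θ.2.1 + r₃ * cos θ.2.2,
    r₁ * sin θ.1 + r₂ * sin θ.2.1 + r₃ * sin θ.2.2,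
    t + 1 / 2 * (r₁ * r₂ * sin (θ.1 - θ.2.1) + r₁ * r₃ * sin (θ.1 - θ.2.2)
      + r₂ * r₃ * sin (θ.2.1 - θ.2.2)))

variable (r₁ r₂ r₃ t : ℝ)

attribute [local fun_prop] analyticAt_fst analyticAt_snd

theorem analyticOnNhd_circleProductCoords :
    AnalyticOnNhd ℝ (circleProductCoords r₁ r₂ r₃ t) univ := by
  intro θ _
  unfold circleProductCoords
  fun_prop

theorem det_fderiv_circleProductCoords (θ : ℝ × ℝ × ℝ) :
    (fderiv ℝ (circleProductCoords r₁ r₂ r₃ t) θ).det = Matrix.det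
      !![-(r₁ * sin θ.1), -(r₂ * sin θ.2.1), -(r₃ * sin θ.2.2);
        r₁ * cos θ.1, r₂ * cos θ.2.1, r₃ * cos θ.2.2;
        r₁ * (r₂ * cos (θ.1 - θ.2.1) + r₃ * cos (θ.1 - θ.2.2)) / 2,
        r₂ * (r₃ * cos (θ.2.1 - θ.2.2) - r₁ * cos (θ.1 - θ.2.1)) / 2,
        -(r₃ * (r₁ * cos (θ.1 - θ.2.2) + r₂ * cos (θ.2.1 - θ.2.2))) / 2] := by
  have h₁ : HasFDerivAt (fun θ : ℝ × ℝ × ℝ ↦ θ.1) _ θ := hasFDerivAt_fst (𝕜 := ℝ)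
  have h₂ : HasFDerivAt (fun θ : ℝ × ℝ × ℝ ↦ θ.2.1) _ θ := (hasFDerivAt_snd (𝕜 := ℝ)).fst
  have h₃ : HasFDerivAt (fun θ : ℝ × ℝ × ℝ ↦ θ.2.2) _ θ := (hasFDerivAt_snd (𝕜 := ℝ)).snd
  have h : HasFDerivAt (circleProductCoords r₁ r₂ r₃ t) _ θ :=
    ((h₁.cos.const_mul r₁).add (h₂.cos.const_mul r₂) |>.add (h₃.cos.const_mul r₃)).prodMk
      (((h₁.sin.const_mul r₁).add (h₂.sin.const_mul r₂) |>.add (h₃.sin.const_mul r₃)).prodMk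
        ((((h₁.sub h₂).sin.const_mul (r₁ * r₂)).add ((h₁.sub h₃).sin.const_mul (r₁ * r₃)) |>.add
          ((h₂.sub h₃).sin.const_mul (r₂ * r₃))).const_mul (1 / 2) |>.const_add t))
  rw [h.fderiv, ContinuousLinearMap.det_real_prod_real_prod_real]
  congr 1
  ext i j
  fin_cases i <;> fin_cases j <;> simp <;> ring

theorem analyticOnNhd_det_fderiv_circleProductCoords :
    AnalyticOnNhd ℝ (fun θ ↦ (fderiv ℝ (circleProductCoords r₁ r₂ r₃ t) θ).det) univ := by
  intro θ _
  simp only [det_fderiv_circleProductCoords, Matrix.det_fin_three]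
  simp
  fun_prop

theorem det_fderiv_circleProductCoords_ne_zero (h₁ : 0 < r₁) (h₂ : 0 < r₂) (h₃ : 0 < r₃) :
    (fderiv ℝ (circleProductCoords r₁ r₂ r₃ t) (0, 0, π / 2)).det ≠ 0 := by
  rw [det_fderiv_circleProductCoords, Matrix.det_fin_three]
  simp
  exact ne_of_gt (by ring_nf; positivity)

theorem map_circleProductCoords_absolutelyContinuous (h₁ : 0 < r₁) (h₂ : 0 < r₂) (h₃ : 0 < r₃) :
    volume.map (circleProductCoords r₁ r₂ r₃ t) ≪ volume :=
  Measure.map_absolutelyContinuous_of_ae_det_fderiv_ne_zero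
    ((volume : Measure ℝ).prod (volume : Measure (ℝ × ℝ)))
    ((analyticOnNhd_circleProductCoords r₁ r₂ r₃ t).contDiff)
    ((analyticOnNhd_det_fderiv_circleProductCoords r₁ r₂ r₃ t).ae_ne_zero_real_prod_real_prod_real
      ⟨_, det_fderiv_circleProductCoords_ne_zero r₁ r₂ r₃ t h₁ h₂ h₃⟩)

end CircleProductCoords

lemma continuous_heisMul (n : ℕ) : Continuous fun p : Heis n × Heis n ↦ heisMul p.1 p.2 := by
  unfold heisMul; fun_prop

noncomputable def euclideanFinOneEquiv : EuclideanSpace ℂ (Fin 1) ≃ₗᵢ[ℝ] ℂ :=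
  { (PiLp.equivOfUnique 2 ℝ (fun _ : Fin 1 ↦ ℂ)).toLinearEquiv with
    norm_map' := fun v ↦ by simp [EuclideanSpace.norm_eq] }

@[simp] lemma euclideanFinOneEquiv_apply (v : EuclideanSpace ℂ (Fin 1)) :
    euclideanFinOneEquiv v = v 0 := rfl

@[simp] lemma euclideanFinOneEquiv_symm_apply (z : ℂ) (i : Fin 1) :
    euclideanFinOneEquiv.symm z i = z := rfl

noncomputable def circleParam (θ : ℝ) : Metric.sphere (0 : EuclideanSpace ℂ (Fin 1)) 1 :=
  ⟨euclideanFinOneEquiv.symm (Complex.exp (θ * Complex.I)), by simp⟩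

lemma continuous_circleParam : Continuous circleParam := by
  unfold circleParam; fun_prop

lemma exp_arg_mul_I_of_mem_sphere (v : Metric.sphere (0 : EuclideanSpace ℂ (Fin 1)) 1) :
    Complex.exp (Complex.arg (v.1 0) * Complex.I) = v.1 0 := by
  have h : ‖v.1 0‖ = 1 := by simp [← euclideanFinOneEquiv_apply]
  simpa [h] using Complex.norm_mul_exp_arg_mul_I (v.1 0)

lemma circleParam_arg (v : Metric.sphere (0 : EuclideanSpace ℂ (Fin 1)) 1) :
    circleParam (Complex.arg (v.1 0)) = v :=
  Subtype.ext <| euclideanFinOneEquiv.injective <| by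
    simp [circleParam, exp_arg_mul_I_of_mem_sphere]

lemma toSphere_absolutelyContinuous_map_circleParam :
    (volume : Measure (EuclideanSpace ℂ (Fin 1))).toSphere ≪ volume.map circleParam := by
  refine Measure.AbsolutelyContinuous.mk fun N hN hN₀ ↦ ?_
  rw [Measure.map_apply continuous_circleParam.measurable hN] at hN₀
  rw [Measure.toSphere_apply' _ hN,
    ← euclideanFinOneEquiv.symm.measurePreserving.measure_preimage_emb
      euclideanFinOneEquiv.symm.toHomeomorph.measurableEmbedding]
  refine mul_eq_zero_of_right _ (measure_mono_null ?_ <|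
    addHaar_image_eq_zero_of_differentiableOn_of_addHaar_eq_zero volume
      (f := fun w : ℂ ↦ w.re * Complex.exp (w.im * Complex.I)) (by fun_prop)
      (s := Complex.im ⁻¹' (circleParam ⁻¹' N)) ?_)
  · rintro w ⟨s, hs, _, ⟨v, hvN, rfl⟩, hw⟩
    replace hw : w = s * v.1 0 := by
      simpa using congrArg euclideanFinOneEquiv hw.symm
    refine ⟨s + Complex.arg (v.1 0) * Complex.I, ?_, ?_⟩
    · simpa [circleParam_arg] using hvN
    · simp [hw, exp_arg_mul_I_of_mem_sphere]
  · have : Complex.im ⁻¹' (circleParam ⁻¹' N) =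
        Complex.measurableEquivRealProd ⁻¹' (univ ×ˢ (circleParam ⁻¹' N)) := by
      ext; simp
    rw [this, Complex.volume_preserving_equiv_real_prod.measure_preimage_equiv,
      Measure.volume_eq_prod, Measure.prod_prod, hN₀, mul_zero]

noncomputable def heisCircle (r t θ : ℝ) : Heis 1 :=
  ((r : ℂ) • (circleParam θ : EuclideanSpace ℂ (Fin 1)), t)

lemma measurable_heisCircle (r t : ℝ) : Measurable (heisCircle r t) := by
  unfold heisCircle; fun_prop

lemma heisSigma_absolutelyContinuous (r t : ℝ) :
    heisSigma 1 r t ≪ volume.map (heisCircle r t) := by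
  let g (v : Metric.sphere (0 : EuclideanSpace ℂ (Fin 1)) 1) : Heis 1 :=
    ((r : ℂ) • (v : EuclideanSpace ℂ (Fin 1)), t)
  have hg : Measurable g := by fun_prop
  rw [heisSigma, unitSphereProb, show heisCircle r t = g ∘ circleParam from rfl,
    ← Measure.map_map hg continuous_circleParam.measurable]
  exact (Measure.smul_absolutelyContinuous.trans
    toSphere_absolutelyContinuous_map_circleParam).map hg

lemma prod_heisSigma_absolutelyContinuous (r₁ r₂ r₃ t₁ t₂ t₃ : ℝ) :
    (heisSigma 1 r₁ t₁).prod ((heisSigma 1 r₂ t₂).prod (heisSigma 1 r₃ t₃)) ≪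
      volume.map
        (Prod.map (heisCircle r₁ t₁) (Prod.map (heisCircle r₂ t₂) (heisCircle r₃ t₃))) := by
  have h := (heisSigma_absolutelyContinuous r₁ t₁).prod
    ((heisSigma_absolutelyContinuous r₂ t₂).prod (heisSigma_absolutelyContinuous r₃ t₃))
  rwa [Measure.map_prod_map _ _ (measurable_heisCircle r₂ t₂) (measurable_heisCircle r₃ t₃),
    Measure.map_prod_map _ _ (measurable_heisCircle r₁ t₁)
      ((measurable_heisCircle r₂ t₂).prodMap (measurable_heisCircle r₃ t₃)),
    ← Measure.volume_eq_prod, ← Measure.volume_eq_prod] at h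

noncomputable def heisOfCoords (p : ℝ × ℝ × ℝ) : Heis 1 :=
  (euclideanFinOneEquiv.symm ⟨p.1, p.2.1⟩, p.2.2)

lemma measurePreserving_heisOfCoords : MeasurePreserving heisOfCoords volume volume :=
  ((euclideanFinOneEquiv.symm.measurePreserving.comp
      (Complex.volume_preserving_equiv_real_prod.symm)).prod (.id volume)).comp
    (volume_preserving_prodAssoc.symm)

lemma heisMul_comp_heisCircle (r₁ r₂ r₃ t₁ t₂ t₃ : ℝ) :
    (fun p : Heis 1 × Heis 1 × Heis 1 ↦ heisMul (heisMul p.1 p.2.1) p.2.2) ∘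
        Prod.map (heisCircle r₁ t₁) (Prod.map (heisCircle r₂ t₂) (heisCircle r₃ t₃)) =
      heisOfCoords ∘ circleProductCoords r₁ r₂ r₃ (t₁ + t₂ + t₃) := by
  ext θ
  · apply Complex.ext <;>
      simp [heisMul, heisCircle, heisOfCoords, circleProductCoords, circleParam,
        Complex.exp_ofReal_mul_I_re, Complex.exp_ofReal_mul_I_im]
  · simp [heisMul, heisCircle, heisOfCoords, circleProductCoords, circleParam,
      Complex.exp_ofReal_mul_I_re, Complex.exp_ofReal_mul_I_im, sin_sub]
    ring

theorem stmt15 (r₁ r₂ r₃ : ℝ) (hr₁ : 0 < r₁) (hr₂ : 0 < r₂) (hr₃ : 0 < r₃) (t₁ t₂ t₃ : ℝ) :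
    Measure.map (fun p : Heis 1 × Heis 1 × Heis 1 => heisMul (heisMul p.1 p.2.1) p.2.2)
        ((heisSigma 1 r₁ t₁).prod ((heisSigma 1 r₂ t₂).prod (heisSigma 1 r₃ t₃))) ≪
      (volume : Measure (Heis 1)) := by
  have hmul : Measurable fun p : Heis 1 × Heis 1 × Heis 1 ↦ heisMul (heisMul p.1 p.2.1) p.2.2 :=
    ((continuous_heisMul 1).comp₂ ((continuous_heisMul 1).comp₂ continuous_fst
      continuous_snd.fst) continuous_snd.snd).measurable
  refine ((prod_heisSigma_absolutelyContinuous r₁ r₂ r₃ t₁ t₂ t₃).map hmul).trans ?_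
  rw [Measure.map_map hmul ((measurable_heisCircle r₁ t₁).prodMap
      ((measurable_heisCircle r₂ t₂).prodMap (measurable_heisCircle r₃ t₃))),
    heisMul_comp_heisCircle,
    ← Measure.map_map measurePreserving_heisOfCoords.measurable
      (analyticOnNhd_circleProductCoords r₁ r₂ r₃ _).continuous.measurable,
    ← measurePreserving_heisOfCoords.map_eq]
  exact (map_circleProductCoords_absolutelyContinuous r₁ r₂ r₃ _ hr₁ hr₂ hr₃).map
    measurePreserving_heisOfCoords.measurable
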